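/- arXiv:2508.13016 — 2 statements merged into one kernel-verified Lean document; each statement's English description precedes it below -/
import Mathlib

section
/- For every integer m ≥ 3 there is no interval-filling sequence (x_n) of positive reals whose cardinal function has range exactly {1, m}. That is, if (x_n) is summable, positive, nonincreasing with x_n ≤ ∑_{k>n} x_k for all n, then the range of its cardinal function cannot equal {1, m} for any m ≥ 3. -/
open Set

/-- The achievement set of a sequence: all subsums. -/
noncomputable def achSet (x : ℕ → ℝ) : Set ℝ :=
  {t | ∃ S : Set ℕ, ∑' n : S, x n = t}

/-- The cardinal function: the number of representations of `t` as a subsum. -/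
noncomputable def cardFun (x : ℕ → ℝ) (t : ℝ) : Cardinal :=
  Cardinal.mk {S : Set ℕ // ∑' n : S, x n = t}

/-- The tail sum `r_k = ∑_{n > k} x n`. -/
noncomputable def tailSum (x : ℕ → ℝ) (k : ℕ) : ℝ := ∑' n, x (k + 1 + n)

/-- Prepending a term to a sequence. -/
def prepend (y : ℝ) (x : ℕ → ℝ) : ℕ → ℝ := fun n =>
  match n with
  | 0 => y
  | Nat.succ m => x m

/-!
Every term `x k` has at least two representations, `{k}` and a greedy one inside the tail
beyond `k`, so if the cardinal function only takes the values `1` and `m`, each `x k` has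
exactly `m` representations. If `x k < r k`, pick a term `x K` smaller than both `x k` and `r k - x k`:
the `m` representations of `x K`, each with `k` added, together with a greedy representation
inside the tail beyond `k` give `m + 1` representations of `x k + x K`, which is impossible.
Hence `r k = x k` for every `k`. Then two distinct representations of the same sum first differ
at some `n` lying in one of them, `A`, and that forces `A` to stop at `n` while the other contains
every index after `n`; so one of them is finite and the other infinite, and no sum has more
than two representations.
-/

open Filter Topology

variable {x : ℕ → ℝ}

lemma tailSum_eq_tsum_nat_add (x : ℕ → ℝ) (k : ℕ) : tailSum x k = ∑' i, x (i + (k + 1)) :=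
  tsum_congr fun i => by rw [add_comm]

lemma tsum_nat_add_eq_add_tailSum (hsum : Summable x) (i : ℕ) :
    ∑' n, x (n + i) = x i + tailSum x i := by
  rw [((summable_nat_add_iff i).mpr hsum).tsum_eq_zero_add, tailSum_eq_tsum_nat_add, zero_add]
  simp_rw [add_right_comm _ 1 i, add_assoc]

lemma le_tsum_subtype (hnn : ∀ n, 0 ≤ x n) (hsum : Summable x) {S : Set ℕ} {k : ℕ}
    (hk : k ∈ S) : x k ≤ ∑' n : S, x n :=
  (hsum.subtype S).le_tsum ⟨k, hk⟩ fun _ _ => hnn _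

lemma tsum_subtype_insert (hsum : Summable x) {S : Set ℕ} {k : ℕ} (hk : k ∉ S) :
    ∑' n : ↑(insert k S), x n = x k + ∑' n : S, x n := by
  rw [insert_eq, (hsum.subtype _).tsum_union_disjoint (disjoint_singleton_left.mpr hk)
    (hsum.subtype _), tsum_singleton]

/-- What remains of `s` after the greedy algorithm has scanned `x 0, …, x (i - 1)`, taking each
term that still fits. -/
noncomputable def greedyRem (x : ℕ → ℝ) (s : ℝ) : ℕ → ℝ
  | 0 => s
  | i + 1 => if x i ≤ greedyRem x s i then greedyRem x s i - x i else greedyRem x s i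

def greedySet (x : ℕ → ℝ) (s : ℝ) : Set ℕ := {i | x i ≤ greedyRem x s i}

lemma greedyRem_succ (x : ℕ → ℝ) (s : ℝ) (i : ℕ) :
    greedyRem x s (i + 1) = greedyRem x s i - (greedySet x s).indicator x i := by
  by_cases h : x i ≤ greedyRem x s i <;> simp [greedyRem, greedySet, h]

lemma sub_greedyRem_eq_sum (x : ℕ → ℝ) (s : ℝ) (n : ℕ) :
    s - greedyRem x s n = ∑ i ∈ Finset.range n, (greedySet x s).indicator x i := by
  induction n with
  | zero => simp [greedyRem]
  | succ n ih => rw [Finset.sum_range_succ, ← ih, greedyRem_succ]; ring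

lemma greedyRem_mem_Icc (hsum : Summable x) (hIF : ∀ n, x n ≤ tailSum x n) {s : ℝ}
    (hs : s ∈ Icc 0 (∑' n, x n)) (i : ℕ) : greedyRem x s i ∈ Icc 0 (∑' n, x (n + i)) := by
  induction i with
  | zero => simpa [greedyRem] using hs
  | succ i ih =>
    obtain ⟨h0, h1⟩ := ih
    have hsplit := tsum_nat_add_eq_add_tailSum hsum i
    rw [← tailSum_eq_tsum_nat_add]
    by_cases h : x i ≤ greedyRem x s i
    · simp only [greedyRem, if_pos h]
      constructor <;> linarith
    · simp only [greedyRem, if_neg h]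
      constructor <;> linarith [hIF i]

/-- One direction of Kakeya's theorem. -/
theorem Icc_subset_achSet (hnn : ∀ n, 0 ≤ x n) (hsum : Summable x)
    (hIF : ∀ n, x n ≤ tailSum x n) : Icc 0 (∑' n, x n) ⊆ achSet x := by
  intro s hs
  refine ⟨greedySet x s, ?_⟩
  have hrem : Tendsto (greedyRem x s) atTop (𝓝 0) :=
    tendsto_of_tendsto_of_tendsto_of_le_of_le tendsto_const_nhds (tendsto_sum_nat_add x)
      (fun i => (greedyRem_mem_Icc hsum hIF hs i).1) (fun i => (greedyRem_mem_Icc hsum hIF hs i).2)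
  rw [tsum_subtype]
  refine ((hasSum_iff_tendsto_nat_of_nonneg (indicator_nonneg fun j _ => hnn j) s).mpr ?_).tsum_eq
  simpa [sub_greedyRem_eq_sum] using (tendsto_const_nhds (x := s)).sub hrem

lemma exists_subset_Ioi_tsum_eq (hnn : ∀ n, 0 ≤ x n) (hsum : Summable x)
    (hIF : ∀ n, x n ≤ tailSum x n) (k : ℕ) {s : ℝ} (hs : s ∈ Icc 0 (tailSum x k)) :
    ∃ T ⊆ Ioi k, ∑' n : T, x n = s := by
  set y : ℕ → ℝ := fun n => x (n + (k + 1))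
  have hyIF : ∀ n, y n ≤ tailSum y n := fun n => by
    convert hIF (n + (k + 1)) using 1
    exact tsum_congr fun i => congrArg x (by omega)
  obtain ⟨S, hS⟩ := Icc_subset_achSet (fun n => hnn _) ((summable_nat_add_iff (k + 1)).mpr hsum)
    hyIF (by rwa [tailSum_eq_tsum_nat_add] at hs)
  refine ⟨(· + (k + 1)) '' S, ?_, ?_⟩
  · rintro _ ⟨n, -, rfl⟩
    exact show k < n + (k + 1) by omega
  · rw [tsum_image x (add_left_injective (k + 1)).injOn, hS]

lemma two_le_cardFun_self (hnn : ∀ n, 0 ≤ x n) (hsum : Summable x)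
    (hIF : ∀ n, x n ≤ tailSum x n) (k : ℕ) : 2 ≤ cardFun x (x k) := by
  obtain ⟨T, hTk, hT⟩ := exists_subset_Ioi_tsum_eq hnn hsum hIF k ⟨hnn k, hIF k⟩
  rw [cardFun, Cardinal.two_le_iff]
  refine ⟨⟨T, hT⟩, ⟨{k}, tsum_singleton k x⟩, fun h => ?_⟩
  have hT' : T = {k} := congrArg Subtype.val h
  exact lt_irrefl k (hTk (hT' ▸ mem_singleton k))

/-- Adding `k` to the representations of `t < x k` and adjoining one representation of
`x k + t` avoiding `k`. -/
lemma cardFun_add_one_le (hnn : ∀ n, 0 ≤ x n) (hsum : Summable x) {k : ℕ} {t : ℝ}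
    (ht : t < x k) {T : Set ℕ} (hkT : k ∉ T) (hT : ∑' n : T, x n = x k + t) :
    cardFun x t + 1 ≤ cardFun x (x k + t) := by
  have hk : ∀ S : {S : Set ℕ // ∑' n : S, x n = t}, k ∉ S.1 := fun S hkS =>
    ((le_tsum_subtype hnn hsum hkS).trans_eq S.2).not_gt ht
  let f : Option {S : Set ℕ // ∑' n : S, x n = t} → {S : Set ℕ // ∑' n : S, x n = x k + t} :=
    fun o => o.elim ⟨T, hT⟩ fun S => ⟨insert k S.1, by rw [tsum_subtype_insert hsum (hk S), S.2]⟩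
  rw [cardFun, cardFun, ← Cardinal.mk_option]
  refine Cardinal.mk_le_of_injective (f := f) ?_
  rintro (_ | S₁) (_ | S₂) h
  · rfl
  · have hT' : T = insert k S₂.1 := congrArg Subtype.val h
    exact absurd (hT' ▸ mem_insert k S₂.1) hkT
  · have hT' : insert k S₁.1 = T := congrArg Subtype.val h
    exact absurd (hT' ▸ mem_insert k S₁.1) hkT
  · have h' := congrArg (fun S => S.1 \ {k}) h
    simp only [f, Option.elim, insert_sdiff_self_of_notMem (hk _)] at h'
    rw [Subtype.ext h']

lemma tailSum_le_of_image_cardFun_subset (hpos : ∀ n, 0 < x n) (hsum : Summable x)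
    (hIF : ∀ n, x n ≤ tailSum x n) {m : ℕ} (hrange : cardFun x '' achSet x ⊆ {1, (m : Cardinal)})
    (k : ℕ) : tailSum x k ≤ x k := by
  by_contra! hk
  have hnn : ∀ n, 0 ≤ x n := fun n => (hpos n).le
  obtain ⟨K, hKk, hKr⟩ := ((hsum.tendsto_atTop_zero.eventually_lt_const (hpos k)).and
    (hsum.tendsto_atTop_zero.eventually_lt_const (sub_pos.mpr hk))).exists
  obtain ⟨T, hTk, hT⟩ := exists_subset_Ioi_tsum_eq hnn hsum hIF k (s := x k + x K)
    ⟨by linarith [hnn k, hnn K], by linarith⟩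
  have hcard := cardFun_add_one_le hnn hsum hKk (fun h => lt_irrefl k (hTk h)) hT
  have hmemK : cardFun x (x K) ∈ ({1, (m : Cardinal)} : Set Cardinal) :=
    hrange ⟨_, ⟨{K}, tsum_singleton K x⟩, rfl⟩
  have hmems : cardFun x (x k + x K) ∈ ({1, (m : Cardinal)} : Set Cardinal) :=
    hrange ⟨_, ⟨T, hT⟩, rfl⟩
  have h2 := two_le_cardFun_self hnn hsum hIF K
  have hKm : cardFun x (x K) = m := hmemK.resolve_left fun h => by simp [h] at h2
  rw [hKm] at hcard h2
  rcases hmems with h | h <;> rw [h] at hcard <;> norm_cast at hcard h2 <;> omega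

lemma tsum_eq_sum_range_add_add_tsum {f : ℕ → ℝ} (hf : Summable f) (n : ℕ) :
    ∑' i, f i = ∑ i ∈ Finset.range n, f i + f n + ∑' i, f (i + (n + 1)) := by
  rw [← hf.sum_add_tsum_nat_add (n + 1), Finset.sum_range_succ]

lemma add_tsum_indicator_eq_of_tsum_eq (hsum : Summable x) {A B : Set ℕ}
    (hAB : ∑' n : A, x n = ∑' n : B, x n) {n : ℕ} (hlow : ∀ j < n, j ∈ A ↔ j ∈ B) (hnA : n ∈ A)
    (hnB : n ∉ B) :
    x n + ∑' i, A.indicator x (i + (n + 1)) = ∑' i, B.indicator x (i + (n + 1)) := by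
  have hhead : ∑ i ∈ Finset.range n, A.indicator x i = ∑ i ∈ Finset.range n, B.indicator x i :=
    Finset.sum_congr rfl fun j hj => by
      have hjAB := hlow j (Finset.mem_range.mp hj)
      by_cases hjB : j ∈ B
      · rw [indicator_of_mem (hjAB.mpr hjB), indicator_of_mem hjB]
      · rw [indicator_of_notMem (mt hjAB.mp hjB), indicator_of_notMem hjB]
  rw [tsum_subtype, tsum_subtype, tsum_eq_sum_range_add_add_tsum (hsum.indicator A) n,
    tsum_eq_sum_range_add_add_tsum (hsum.indicator B) n, hhead, indicator_of_mem hnA,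
    indicator_of_notMem hnB] at hAB
  linarith

/-- Once `r n ≤ x n`, the term `x n` outweighs everything after it. -/
lemma subset_Iic_and_Ioi_subset_of_tsum_eq (hpos : ∀ n, 0 < x n) (hsum : Summable x)
    (hquick : ∀ n, tailSum x n ≤ x n) {A B : Set ℕ} (hAB : ∑' n : A, x n = ∑' n : B, x n)
    {n : ℕ} (hlow : ∀ j < n, j ∈ A ↔ j ∈ B) (hnA : n ∈ A) (hnB : n ∉ B) :
    A ⊆ Iic n ∧ Ioi n ⊆ B := by
  have hnn : ∀ n, 0 ≤ x n := fun n => (hpos n).le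
  have htail := add_tsum_indicator_eq_of_tsum_eq hsum hAB hlow hnA hnB
  have hsumB := (summable_nat_add_iff (n + 1)).mpr (hsum.indicator B)
  have hsumx := (summable_nat_add_iff (n + 1)).mpr hsum
  have hBx : ∑' i, B.indicator x (i + (n + 1)) ≤ tailSum x n := by
    rw [tailSum_eq_tsum_nat_add]
    exact hsumB.tsum_le_tsum (fun i => indicator_le_self' (fun j _ => hnn j) _) hsumx
  have hA0 : 0 ≤ ∑' i, A.indicator x (i + (n + 1)) :=
    tsum_nonneg fun i => indicator_nonneg (fun j _ => hnn j) _
  have hrn := hquick n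
  constructor
  · intro j hjA
    by_contra hjn
    obtain ⟨i, rfl⟩ : ∃ i, j = i + (n + 1) := ⟨j - (n + 1), by simp at hjn; omega⟩
    have : 0 < ∑' i, A.indicator x (i + (n + 1)) :=
      ((summable_nat_add_iff (n + 1)).mpr (hsum.indicator A)).tsum_pos
        (fun i => indicator_nonneg (fun j _ => hnn j) _) i
        (by simpa [indicator_of_mem hjA] using hpos _)
    linarith
  · intro j hjn
    by_contra hjB
    obtain ⟨i, rfl⟩ : ∃ i, j = i + (n + 1) := ⟨j - (n + 1), by simp at hjn; omega⟩
    have : ∑' i, B.indicator x (i + (n + 1)) < tailSum x n := by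
      rw [tailSum_eq_tsum_nat_add]
      exact hsumB.tsum_lt_tsum (i := i) (fun i => indicator_le_self' (fun j _ => hnn j) _)
        (by simpa [indicator_of_notMem hjB] using hpos _) hsumx
    linarith

lemma not_finite_iff_of_tsum_eq (hpos : ∀ n, 0 < x n) (hsum : Summable x)
    (hquick : ∀ n, tailSum x n ≤ x n) {A B : Set ℕ} (hAB : ∑' n : A, x n = ∑' n : B, x n)
    {n : ℕ} (hlow : ∀ j < n, j ∈ A ↔ j ∈ B) (hnA : n ∈ A) (hnB : n ∉ B) :
    ¬(A.Finite ↔ B.Finite) := fun hfin => by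
  obtain ⟨hA, hB⟩ := subset_Iic_and_Ioi_subset_of_tsum_eq hpos hsum hquick hAB hlow hnA hnB
  exact (Ioi_infinite n).mono hB (hfin.mp ((finite_Iic n).subset hA))

lemma eq_of_tsum_eq_of_finite_iff (hpos : ∀ n, 0 < x n) (hsum : Summable x)
    (hquick : ∀ n, tailSum x n ≤ x n) {A B : Set ℕ} (hAB : ∑' n : A, x n = ∑' n : B, x n)
    (hfin : A.Finite ↔ B.Finite) : A = B := by
  classical
  by_contra hne
  have hex : ∃ n, ¬(n ∈ A ↔ n ∈ B) := by
    by_contra! h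
    exact hne (Set.ext h)
  have hlow : ∀ j < Nat.find hex, j ∈ A ↔ j ∈ B := fun j hj => not_not.mp (Nat.find_min hex hj)
  by_cases hnA : Nat.find hex ∈ A
  · have hnB : Nat.find hex ∉ B := fun h => Nat.find_spec hex (iff_of_true hnA h)
    exact not_finite_iff_of_tsum_eq hpos hsum hquick hAB hlow hnA hnB hfin
  · have hnB : Nat.find hex ∈ B := by_contra fun h => Nat.find_spec hex (iff_of_false hnA h)
    exact not_finite_iff_of_tsum_eq hpos hsum hquick hAB.symm (fun j hj => (hlow j hj).symm)
      hnB hnA hfin.symm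

lemma cardFun_le_two (hpos : ∀ n, 0 < x n) (hsum : Summable x)
    (hquick : ∀ n, tailSum x n ≤ x n) (t : ℝ) : cardFun x t ≤ 2 := by
  rw [cardFun, ← Cardinal.mk_Prop]
  refine Cardinal.mk_le_of_injective (f := fun S => S.1.Finite) fun S T h => Subtype.ext ?_
  exact eq_of_tsum_eq_of_finite_iff hpos hsum hquick (S.2.trans T.2.symm) (eq_iff_iff.mp h)

theorem stmt3_general (x : ℕ → ℝ) (hpos : ∀ n, 0 < x n)
    (hsum : Summable x) (hIF : ∀ n, x n ≤ tailSum x n) :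
    ∀ m : ℕ, 3 ≤ m → cardFun x '' achSet x ≠ {1, (m : Cardinal)} := by
  intro m hm hrange
  have hquick : ∀ n, tailSum x n ≤ x n :=
    tailSum_le_of_image_cardFun_subset hpos hsum hIF hrange.subset
  obtain ⟨t, -, ht⟩ : (m : Cardinal) ∈ cardFun x '' achSet x := by simp [hrange]
  have h2 := cardFun_le_two hpos hsum hquick t
  rw [ht] at h2
  norm_cast at h2
  omega

theorem stmt3 (x : ℕ → ℝ) (hpos : ∀ n, 0 < x n) (hanti : ∀ n, x (n + 1) ≤ x n)
    (hsum : Summable x) (hIF : ∀ n, x n ≤ tailSum x n) :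
    ∀ m : ℕ, 3 ≤ m → cardFun x '' achSet x ≠ {1, (m : Cardinal)} :=
  stmt3_general x hpos hsum hIF
end

section
/- Let x_1 ∈ (0,1) be a dyadic rational and let x_n = 1/2^{n-1} for n ≥ 2. Then the range of the cardinal function of (x_n)_{n≥1} is exactly {1,2,3,4}. -/
open Set

/-- A dyadic rational in `[0,∞)`: a number of the form `k / 2^m`. -/
def IsDyadic (t : ℝ) : Prop := ∃ k m : ℕ, t = (k : ℝ) / 2 ^ m

/-!
With `w n = 1 / 2 ^ (n + 1)` the sequence is `prepend a w`, and a subset of `ℕ` is the choice of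
whether to use `a` together with a set of binary digits; hence `cardFun x t = c t + c (t - a)`,
where `c s` counts the binary expansions of `s`. Two different expansions of the same number first
differ at some digit `k`; the one containing `k` must stop there and the other must contain every
digit after `k`. So every number has at most one terminating and one non-terminating expansion:
`c ≤ 2`, `c 0 = 1`, `c s = 0` for `s < 0`, and `c s = 2` for dyadic `s ∈ (0, 1)`. The values
`1, 2, 3, 4` are attained at `t = 0, a / 2, a, (1 + a) / 2`.
-/

section PositiveSummable

variable {ι : Type*} {f : ι → ℝ}

theorem Summable.tsum_subtype_add_tsum_diff (hf : Summable f) {A B : Set ι} (h : A ⊆ B) :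
    ∑' i : A, f i + ∑' i : ↥(B \ A), f i = ∑' i : B, f i := by
  rw [← (hf.subtype A).tsum_union_disjoint disjoint_sdiff_right (hf.subtype _),
    union_sdiff_cancel h]

theorem Summable.tsum_subtype_mono (hf : Summable f) (hf₀ : ∀ i, 0 ≤ f i) {A B : Set ι}
    (h : A ⊆ B) : ∑' i : A, f i ≤ ∑' i : B, f i := by
  rw [← hf.tsum_subtype_add_tsum_diff h]
  exact le_add_of_nonneg_right (tsum_nonneg fun i => hf₀ i)

theorem Summable.eq_of_subset_of_tsum_subtype_le (hf : Summable f) (hf₀ : ∀ i, 0 < f i)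
    {A B : Set ι} (h : A ⊆ B) (hle : ∑' i : B, f i ≤ ∑' i : A, f i) : A = B := by
  refine h.antisymm fun i hiB => by_contra fun hiA => ?_
  have hi : f i ≤ ∑' j : ↥(B \ A), f j := by
    simpa using hf.tsum_subtype_mono (fun j => (hf₀ j).le)
      (singleton_subset_iff.2 (show i ∈ B \ A from ⟨hiB, hiA⟩))
  linarith [hf.tsum_subtype_add_tsum_diff h, hf₀ i]

theorem cardFun_zero_of_pos {f : ℕ → ℝ} (hf : Summable f) (hf₀ : ∀ n, 0 < f n) :
    cardFun f 0 = 1 := by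
  have hempty : ∀ S : Set ℕ, ∑' n : S, f n = 0 ↔ S = ∅ := fun S =>
    ⟨fun hS => (hf.eq_of_subset_of_tsum_subtype_le hf₀ (empty_subset S) (by simp [hS])).symm,
      fun hS => by simp [hS]⟩
  refine Cardinal.eq_one_iff_unique.2 ⟨⟨fun S T => ?_⟩, ⟨⟨∅, by simp⟩⟩⟩
  exact Subtype.ext (((hempty _).1 S.2).trans ((hempty _).1 T.2).symm)

theorem cardFun_of_neg {f : ℕ → ℝ} (hf₀ : ∀ n, 0 ≤ f n) {t : ℝ} (ht : t < 0) :
    cardFun f t = 0 :=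
  Cardinal.mk_eq_zero_iff.2 ⟨fun S => ht.not_ge (S.2 ▸ tsum_nonneg fun n => hf₀ n)⟩

end PositiveSummable

theorem mem_achSet_iff_cardFun_ne_zero {x : ℕ → ℝ} {t : ℝ} :
    t ∈ achSet x ↔ cardFun x t ≠ 0 := by
  rw [cardFun, Cardinal.mk_ne_zero_iff, nonempty_subtype]
  rfl

theorem tsum_prepend_image_succ (a : ℝ) (y : ℕ → ℝ) (T : Set ℕ) :
    ∑' n : ↥(Nat.succ '' T), prepend a y n = ∑' n : T, y n :=
  tsum_image _ Nat.succ_injective.injOn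

theorem tsum_prepend_insert_zero_image_succ {y : ℕ → ℝ} (hy : Summable y) (a : ℝ) (T : Set ℕ) :
    ∑' n : ↥(insert 0 (Nat.succ '' T)), prepend a y n = a + ∑' n : T, y n := by
  have hsum : Summable (prepend a y) := (summable_nat_add_iff 1).1 hy
  rw [insert_eq, (hsum.subtype _).tsum_union_disjoint (by simp) (hsum.subtype _), tsum_singleton,
    tsum_prepend_image_succ]
  rfl

theorem cardFun_prepend {y : ℕ → ℝ} (hy : Summable y) (a t : ℝ) :
    cardFun (prepend a y) t = cardFun y t + cardFun y (t - a) := by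
  have hfiber : {S : Set ℕ | ∑' n : S, prepend a y n = t} =
      (Nat.succ '' ·) '' {T | ∑' n : T, y n = t} ∪
        (fun T => insert 0 (Nat.succ '' T)) '' {T | ∑' n : T, y n = t - a} := by
    ext S
    rw [mem_ofPred_eq]
    refine ⟨fun hS => ?_, ?_⟩
    · have hS' : Nat.succ '' (Nat.succ ⁻¹' S) = S \ {0} := by
        rw [image_preimage_eq_inter_range, Nat.range_succ]
        ext n
        simp [Nat.pos_iff_ne_zero]
      by_cases h0 : 0 ∈ S
      · have hSeq : insert 0 (Nat.succ '' (Nat.succ ⁻¹' S)) = S := by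
          rw [hS', insert_sdiff_singleton, insert_eq_of_mem h0]
        rw [← hSeq, tsum_prepend_insert_zero_image_succ hy] at hS
        exact Or.inr ⟨_, eq_sub_of_add_eq' hS, hSeq⟩
      · have hSeq : Nat.succ '' (Nat.succ ⁻¹' S) = S := by rw [hS', sdiff_singleton_eq_self h0]
        rw [← hSeq, tsum_prepend_image_succ] at hS
        exact Or.inl ⟨_, hS, hSeq⟩
    · rintro (⟨T, hT, rfl⟩ | ⟨T, hT, rfl⟩)
      · exact (tsum_prepend_image_succ a y T).trans hT
      · exact (tsum_prepend_insert_zero_image_succ hy a T).trans (add_eq_of_eq_sub' hT)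
  have hdisj : Disjoint ((Nat.succ '' ·) '' {T | ∑' n : T, y n = t})
      ((fun T => insert 0 (Nat.succ '' T)) '' {T | ∑' n : T, y n = t - a}) := by
    rw [disjoint_left]
    rintro _ ⟨T₁, -, rfl⟩ ⟨T₂, -, h⟩
    simpa using congrArg (0 ∈ ·) h
  have hpre : ∀ T, Nat.succ ⁻¹' insert 0 (Nat.succ '' T) = T := fun T => by ext n; simp
  have hinj : Function.Injective fun T : Set ℕ => insert 0 (Nat.succ '' T) := fun T₁ T₂ h => by
    rw [← hpre T₁, ← hpre T₂]
    exact congrArg _ h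
  change Cardinal.mk ↥{S : Set ℕ | _} = _
  rw [hfiber, Cardinal.mk_union_of_disjoint hdisj, Cardinal.mk_image_eq hinj,
    Cardinal.mk_image_eq (image_injective.2 Nat.succ_injective)]
  rfl

theorem Cardinal.add_mem_of_le_two {c₁ c₂ : Cardinal} (h₁ : c₁ ≤ 2) (h₂ : c₂ ≤ 2)
    (h : c₁ + c₂ ≠ 0) : c₁ + c₂ ∈ ({1, 2, 3, 4} : Set Cardinal) := by
  obtain ⟨n₁, hn₁, rfl⟩ := Cardinal.exists_nat_eq_of_le_nat (n := 2) h₁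
  obtain ⟨n₂, hn₂, rfl⟩ := Cardinal.exists_nat_eq_of_le_nat (n := 2) h₂
  rw [← Nat.cast_add] at h ⊢
  have : n₁ + n₂ = 1 ∨ n₁ + n₂ = 2 ∨ n₁ + n₂ = 3 ∨ n₁ + n₂ = 4 := by
    have : n₁ + n₂ ≠ 0 := by exact_mod_cast h
    omega
  rcases this with h' | h' | h' | h' <;> simp [h']

theorem IsDyadic.div_two {s : ℝ} (hs : IsDyadic s) : IsDyadic (s / 2) := by
  obtain ⟨k, m, rfl⟩ := hs
  exact ⟨k, m + 1, by rw [pow_succ, div_div]⟩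

theorem IsDyadic.one_add {s : ℝ} (hs : IsDyadic s) : IsDyadic (1 + s) := by
  obtain ⟨k, m, rfl⟩ := hs
  exact ⟨2 ^ m + k, m, by push_cast; field_simp⟩

theorem IsDyadic.one_sub {s : ℝ} (hs : IsDyadic s) (hs₁ : s ≤ 1) : IsDyadic (1 - s) := by
  obtain ⟨k, m, rfl⟩ := hs
  have hk : k ≤ 2 ^ m := by
    rw [div_le_one (by positivity)] at hs₁
    exact_mod_cast hs₁
  exact ⟨2 ^ m - k, m, by rw [Nat.cast_sub hk]; push_cast; field_simp⟩

noncomputable def binaryWeight (n : ℕ) : ℝ := 1 / 2 ^ (n + 1)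

namespace binaryWeight

theorem pos (n : ℕ) : 0 < binaryWeight n := by unfold binaryWeight; positivity

theorem summable : Summable binaryWeight :=
  (summable_geometric_two' 1).congr fun n => by rw [binaryWeight, pow_succ']; ring

theorem tsum_Ioi (k : ℕ) : ∑' n : Ioi k, binaryWeight n = binaryWeight k := by
  have hIoi : Ioi k = range (· + (k + 1)) := by
    ext n
    simp only [mem_Ioi, mem_range]
    exact ⟨fun h => ⟨n - (k + 1), by omega⟩, by rintro ⟨i, rfl⟩; omega⟩
  rw [hIoi, tsum_range _ (add_left_injective _)]
  have hshift : ∀ i, binaryWeight (i + (k + 1)) = binaryWeight k / 2 / 2 ^ i := fun i => by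
    simp only [binaryWeight]; field_simp; ring
  simp only [hshift, tsum_geometric_two']

theorem tsum_insert {T : Set ℕ} {k : ℕ} (hk : k ∉ T) :
    ∑' n : ↥(insert k T), binaryWeight n = binaryWeight k + ∑' n : T, binaryWeight n := by
  rw [insert_eq, (summable.subtype _).tsum_union_disjoint (disjoint_singleton_left.2 hk)
    (summable.subtype _), tsum_singleton]

theorem tsum_insert_eq_tsum_union_Ioi {L : Set ℕ} {k : ℕ} (hL : L ⊆ Iio k) :
    ∑' n : ↥(insert k L), binaryWeight n = ∑' n : ↥(L ∪ Ioi k), binaryWeight n := by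
  have hdisj : Disjoint L (Ioi k) :=
    disjoint_left.2 fun n hn hn' => (mem_Iio.1 (hL hn)).not_gt hn'
  rw [tsum_insert fun hk => lt_irrefl k (hL hk),
    (summable.subtype _).tsum_union_disjoint hdisj (summable.subtype _), tsum_Ioi, add_comm]

theorem bddAbove_and_not_bddAbove_of_tsum_eq {T₁ T₂ : Set ℕ} {k : ℕ}
    (h : ∑' n : T₁, binaryWeight n = ∑' n : T₂, binaryWeight n) (hk₁ : k ∈ T₁) (hk₂ : k ∉ T₂)
    (hlow : ∀ n < k, n ∈ T₁ ↔ n ∈ T₂) : BddAbove T₁ ∧ ¬ BddAbove T₂ := by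
  set L := T₁ ∩ Iio k
  have hsub₁ : insert k L ⊆ T₁ := insert_subset hk₁ inter_subset_left
  have hsub₂ : T₂ ⊆ L ∪ Ioi k := fun n hn => by
    rcases lt_trichotomy n k with hnk | rfl | hnk
    · exact Or.inl ⟨(hlow n hnk).2 hn, hnk⟩
    · exact absurd hn hk₂
    · exact Or.inr hnk
  -- `insert k L ⊆ T₁` and `T₂ ⊆ L ∪ Ioi k` have equal sums, so both inclusions are equalities.
  have hval := tsum_insert_eq_tsum_union_Ioi (L := L) inter_subset_right
  have hle₁ := summable.tsum_subtype_mono (fun n => (pos n).le) hsub₁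
  have hle₂ := summable.tsum_subtype_mono (fun n => (pos n).le) hsub₂
  have hT₁ : insert k L = T₁ := summable.eq_of_subset_of_tsum_subtype_le pos hsub₁ (by linarith)
  have hT₂ : T₂ = L ∪ Ioi k := summable.eq_of_subset_of_tsum_subtype_le pos hsub₂ (by linarith)
  refine ⟨hT₁ ▸ bddAbove_insert.2 (bddAbove_Iio.mono inter_subset_right), fun hbdd => ?_⟩
  exact not_bddAbove_Ioi k (hbdd.mono (hT₂ ▸ subset_union_right))

theorem eq_of_tsum_eq_of_bddAbove_iff {T₁ T₂ : Set ℕ}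
    (h : ∑' n : T₁, binaryWeight n = ∑' n : T₂, binaryWeight n)
    (hbdd : BddAbove T₁ ↔ BddAbove T₂) : T₁ = T₂ := by
  classical
  by_contra hne
  have hdiff : ∃ n, ¬(n ∈ T₁ ↔ n ∈ T₂) := by
    by_contra! hall
    exact hne (Set.ext hall)
  have hlow : ∀ n < Nat.find hdiff, n ∈ T₁ ↔ n ∈ T₂ :=
    fun n hn => not_not.1 (Nat.find_min hdiff hn)
  by_cases hk : Nat.find hdiff ∈ T₁
  · have hk₂ : Nat.find hdiff ∉ T₂ := fun hk₂ => Nat.find_spec hdiff (iff_of_true hk hk₂)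
    obtain ⟨hb₁, hb₂⟩ := bddAbove_and_not_bddAbove_of_tsum_eq h hk hk₂ hlow
    exact hb₂ (hbdd.1 hb₁)
  · have hk₂ : Nat.find hdiff ∈ T₂ :=
      not_not.1 fun hk₂ => Nat.find_spec hdiff (iff_of_false hk hk₂)
    obtain ⟨hb₂, hb₁⟩ :=
      bddAbove_and_not_bddAbove_of_tsum_eq h.symm hk₂ hk fun n hn => (hlow n hn).symm
    exact hb₁ (hbdd.2 hb₂)

theorem cardFun_le_two (s : ℝ) : cardFun binaryWeight s ≤ 2 :=
  Cardinal.mk_Prop ▸ Cardinal.mk_le_of_injective (f := fun T : Subtype _ => BddAbove T.1)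
    fun T₁ T₂ h => Subtype.ext (eq_of_tsum_eq_of_bddAbove_iff (T₁.2.trans T₂.2.symm) (iff_of_eq h))

theorem exists_subset_Iio_tsum_eq (m : ℕ) {j : ℕ} (hj : j < 2 ^ m) :
    ∃ T ⊆ Iio m, ∑' n : T, binaryWeight n = j / 2 ^ m := by
  induction m generalizing j with
  | zero => exact ⟨∅, empty_subset _, by simp [Nat.lt_one_iff.1 hj]⟩
  | succ m ih =>
    obtain ⟨i, rfl | rfl⟩ := Nat.even_or_odd' j
    · obtain ⟨T, hTm, hT⟩ := ih (j := i) (by omega)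
      refine ⟨T, hTm.trans (Iio_subset_Iio m.le_succ), ?_⟩
      rw [hT, pow_succ]; push_cast; field_simp
    · obtain ⟨T, hTm, hT⟩ := ih (j := i) (by omega)
      refine ⟨insert m T, insert_subset (by simp) (hTm.trans (Iio_subset_Iio m.le_succ)), ?_⟩
      rw [tsum_insert fun hm => lt_irrefl m (hTm hm), hT, binaryWeight, pow_succ]
      push_cast; field_simp; ring

theorem two_le_cardFun {j m : ℕ} (hj₀ : 0 < j) (hj : j < 2 ^ m) :
    2 ≤ cardFun binaryWeight (j / 2 ^ m) := by
  obtain ⟨T, hTm, hT⟩ := exists_subset_Iio_tsum_eq m hj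
  have hTbdd : BddAbove T := bddAbove_Iio.mono hTm
  have hTne : T.Nonempty := nonempty_iff_ne_empty.2 fun hT₀ => by
    subst hT₀
    simp only [tsum_empty] at hT
    exact (div_pos (Nat.cast_pos.2 hj₀) (by positivity)).ne hT
  set k := sSup T
  have hL : T \ {k} ⊆ Iio k := fun n hn => lt_of_le_of_ne (le_csSup hTbdd hn.1) hn.2
  have hTk : insert k (T \ {k}) = T := by
    rw [insert_sdiff_singleton, insert_eq_of_mem (Nat.sSup_mem hTne hTbdd)]
  refine Cardinal.two_le_iff.2 ⟨⟨T, hT⟩, ⟨T \ {k} ∪ Ioi k, ?_⟩, fun h => ?_⟩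
  · rw [← tsum_insert_eq_tsum_union_Ioi hL, hTk, hT]
  · have hT' : T = T \ {k} ∪ Ioi k := congrArg Subtype.val h
    exact not_bddAbove_Ioi k (hTbdd.mono (hT' ▸ subset_union_right))

theorem cardFun_of_isDyadic {s : ℝ} (hs : s ∈ Ioo 0 1) (hd : IsDyadic s) :
    cardFun binaryWeight s = 2 := by
  obtain ⟨j, m, rfl⟩ := hd
  have h2m : (0 : ℝ) < 2 ^ m := by positivity
  have hj₀ : 0 < j := by exact_mod_cast (div_pos_iff_of_pos_right h2m).1 hs.1
  have hj : j < 2 ^ m := by exact_mod_cast (div_lt_one h2m).1 hs.2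
  exact (cardFun_le_two _).antisymm (two_le_cardFun hj₀ hj)

end binaryWeight

theorem exists_cardFun_prepend_binaryWeight_eq {a : ℝ} (ha : a ∈ Ioo 0 1) (had : IsDyadic a) :
    ∀ c ∈ ({1, 2, 3, 4} : Set Cardinal), ∃ t, cardFun (prepend a binaryWeight) t = c := by
  obtain ⟨ha₀, ha₁⟩ := ha
  have hzero := cardFun_zero_of_pos binaryWeight.summable binaryWeight.pos
  have hneg : ∀ s < 0, cardFun binaryWeight s = 0 :=
    fun s => cardFun_of_neg fun n => (binaryWeight.pos n).le
  have hdy : ∀ s ∈ Ioo (0 : ℝ) 1, IsDyadic s → cardFun binaryWeight s = 2 :=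
    fun s => binaryWeight.cardFun_of_isDyadic
  simp only [mem_insert_iff, mem_singleton_iff, cardFun_prepend binaryWeight.summable]
  rintro c (rfl | rfl | rfl | rfl)
  · exact ⟨0, by rw [hzero, hneg _ (by linarith), add_zero]⟩
  · refine ⟨a / 2, ?_⟩
    rw [hdy _ ⟨by linarith, by linarith⟩ had.div_two, hneg _ (by linarith), add_zero]
  · exact ⟨a, by rw [hdy a ⟨ha₀, ha₁⟩ had, sub_self, hzero]; norm_num⟩
  · refine ⟨(1 + a) / 2, ?_⟩
    rw [hdy _ ⟨by linarith, by linarith⟩ had.one_add.div_two,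
      show (1 + a) / 2 - a = (1 - a) / 2 by ring,
      hdy _ ⟨by linarith, by linarith⟩ (had.one_sub ha₁.le).div_two]
    norm_num

theorem stmt8 (a : ℝ) (ha : a ∈ Set.Ioo (0 : ℝ) 1) (had : IsDyadic a)
    (x : ℕ → ℝ) (hx0 : x 0 = a) (hx : ∀ n, 1 ≤ n → x n = 1 / 2 ^ n) :
    cardFun x '' achSet x = {1, 2, 3, 4} := by
  have hxa : x = prepend a binaryWeight := funext fun n => by
    cases n with
    | zero => exact hx0
    | succ n => exact hx (n + 1) n.succ_pos
  subst hxa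
  ext c
  simp only [mem_image, mem_achSet_iff_cardFun_ne_zero]
  refine ⟨?_, fun hc => ?_⟩
  · rintro ⟨t, ht, rfl⟩
    rw [cardFun_prepend binaryWeight.summable] at ht ⊢
    exact Cardinal.add_mem_of_le_two (binaryWeight.cardFun_le_two _)
      (binaryWeight.cardFun_le_two _) ht
  · obtain ⟨t, rfl⟩ := exists_cardFun_prepend_binaryWeight_eq ha had c hc
    exact ⟨t, fun h => by simp [h] at hc, rfl⟩
end
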